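/- arXiv:0911.4068 — 3 statements merged into one kernel-verified Lean document; each statement's English description precedes it below -/
import Mathlib

section
/- For positive integers p and q, the determinant of the 2×2 Hermitian matrix (h_{α β̄}) obtained from the Kähler potential u(z₁,z₂) = log(1 + |z₁|^{2p} + |z₂|^{2q}) on ℂ², i.e. h_{α β̄} = ∂²u/∂z_α ∂z̄_β, equals p²q²·|z₁|^{2(p-1)}·|z₂|^{2(q-1)} / (1 + |z₁|^{2p} + |z₂|^{2q})³ at every point where z₁, z₂ ≠ 0. -/
/-!
Every entry is a mixed derivative `∂ₛ∂ₜ` of the logarithm of an explicit polarized expression.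
Off the diagonal `s` and `t` enter different summands, `Φ = f s + g t`, so the entry is
`-f' g' / Φ ^ 2`; on the diagonal they enter as a product, `K + (s * t) ^ n`, which gives
`n ^ 2 * (s * t) ^ (n - 1) * K / Φ ^ 2`. With `A = |z₁|²` and `B = |z₂|²`, the identity
`(1 + A ^ p) * (1 + B ^ q) - A ^ p * B ^ q = Φ` then collapses the determinant.
-/

open Complex

/-- The mixed Wirtinger derivative `∂²F/∂z_α∂z̄_β` of a function of `(z₁,z₂)`, computed
via the standard polarization: `F` is given as a function of the holomorphic variables
`z` and the antiholomorphic variables `w̄`, differentiated separately and evaluated at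
`w = conj z`. -/
noncomputable def wirt (F : (Fin 2 → ℂ) → (Fin 2 → ℂ) → ℂ) (z : Fin 2 → ℂ)
    (α β : Fin 2) : ℂ :=
  deriv (fun s => deriv (fun t =>
      F (Function.update z α s)
        (Function.update (fun i => (starRingEnd ℂ) (z i)) β t))
    ((starRingEnd ℂ) (z β))) (z α)

/-- The Kähler potential `u = log(1 + |z₁|^{2p} + |z₂|^{2q})`, polarized. -/
noncomputable def upol (p q : ℕ) : (Fin 2 → ℂ) → (Fin 2 → ℂ) → ℂ :=
  fun z w => Complex.log (1 + (z 0 * w 0)^p + (z 1 * w 1)^q)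

open ComplexConjugate Function Filter Topology

theorem hasDerivAt_const_mul_pow {𝕜 : Type*} [NontriviallyNormedField 𝕜] (c x : 𝕜) (n : ℕ) :
    HasDerivAt (fun y => (c * y) ^ n) (n * c ^ n * x ^ (n - 1)) x := by
  simp_rw [mul_pow]
  exact ((hasDerivAt_pow n x).const_mul (c ^ n)).congr_deriv (by ring)

theorem hasDerivAt_mul_const_pow {𝕜 : Type*} [NontriviallyNormedField 𝕜] (c x : 𝕜) (n : ℕ) :
    HasDerivAt (fun y => (y * c) ^ n) (n * c ^ n * x ^ (n - 1)) x := by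
  simpa only [mul_comm _ c] using hasDerivAt_const_mul_pow c x n

theorem deriv_deriv_log_add {f g : ℂ → ℂ} {f' g' a w : ℂ} (hf : HasDerivAt f f' a)
    (hg : HasDerivAt g g' w) (h : f a + g w ∈ slitPlane) :
    deriv (fun s => deriv (fun t => log (f s + g t)) w) a = -(f' * g') / (f a + g w) ^ 2 := by
  have hnear : ∀ᶠ s in 𝓝 a, f s + g w ∈ slitPlane :=
    (hf.continuousAt.add continuousAt_const).eventually_mem (isOpen_slitPlane.mem_nhds h)
  have hinner : (fun s => deriv (fun t => log (f s + g t)) w) =ᶠ[𝓝 a]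
      fun s => g' / (f s + g w) :=
    hnear.mono fun s hs => ((hg.const_add (f s)).clog hs).deriv
  rw [hinner.deriv_eq,
    ((hasDerivAt_const a g').fun_div (hf.add_const (g w)) (slitPlane_ne_zero h)).deriv]
  ring

theorem deriv_deriv_log_add_mul_pow (K a c : ℂ) (n : ℕ) (h : K + (a * c) ^ n ∈ slitPlane) :
    deriv (fun s => deriv (fun t => log (K + (s * t) ^ n)) c) a
      = n ^ 2 * (a * c) ^ (n - 1) * K / (K + (a * c) ^ n) ^ 2 := by
  have hden : HasDerivAt (fun s => K + (s * c) ^ n) (n * c ^ n * a ^ (n - 1)) a :=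
    (hasDerivAt_mul_const_pow c a n).const_add K
  have hnear : ∀ᶠ s in 𝓝 a, K + (s * c) ^ n ∈ slitPlane :=
    hden.continuousAt.eventually_mem (isOpen_slitPlane.mem_nhds h)
  have hinner : (fun s => deriv (fun t => log (K + (s * t) ^ n)) c) =ᶠ[𝓝 a]
      fun s => n * c ^ (n - 1) * s ^ n / (K + (s * c) ^ n) := by
    refine hnear.mono fun s hs => ?_
    dsimp only
    rw [(((hasDerivAt_const_mul_pow s c n).const_add K).clog hs).deriv]
    ring
  have hnum : HasDerivAt (fun s => n * c ^ (n - 1) * s ^ n)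
      (n * c ^ (n - 1) * (n * a ^ (n - 1))) a :=
    (hasDerivAt_pow n a).const_mul _
  rw [hinner.deriv_eq, (hnum.fun_div hden (slitPlane_ne_zero h)).deriv]
  ring

theorem one_add_pow_add_pow_mem_slitPlane (x y : ℂ) (p q : ℕ) :
    1 + (x * conj x) ^ p + (y * conj y) ^ q ∈ slitPlane := by
  rw [mul_conj, mul_conj]
  norm_cast
  exact ofReal_mem_slitPlane.2 (by simp only [normSq_eq_norm_sq]; positivity)

section WirtUpol

variable (p q : ℕ) (z : Fin 2 → ℂ)

theorem wirt_upol_zero_zero : wirt (upol p q) z 0 0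
    = p ^ 2 * (z 0 * conj (z 0)) ^ (p - 1) * (1 + (z 1 * conj (z 1)) ^ q)
      / (1 + (z 0 * conj (z 0)) ^ p + (z 1 * conj (z 1)) ^ q) ^ 2 := by
  simp only [wirt, upol, update_self, ne_eq, one_ne_zero, not_false_eq_true, update_of_ne,
    add_right_comm _ _ ((z 1 * conj (z 1)) ^ q)]
  exact deriv_deriv_log_add_mul_pow _ _ _ _ (one_add_pow_add_pow_mem_slitPlane (z 1) (z 0) q p)

theorem wirt_upol_one_one : wirt (upol p q) z 1 1
    = q ^ 2 * (z 1 * conj (z 1)) ^ (q - 1) * (1 + (z 0 * conj (z 0)) ^ p)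
      / (1 + (z 0 * conj (z 0)) ^ p + (z 1 * conj (z 1)) ^ q) ^ 2 := by
  simp only [wirt, upol, update_self, ne_eq, zero_ne_one, not_false_eq_true, update_of_ne]
  exact deriv_deriv_log_add_mul_pow _ _ _ _ (one_add_pow_add_pow_mem_slitPlane (z 0) (z 1) p q)

theorem wirt_upol_zero_one : wirt (upol p q) z 0 1
    = -(p * conj (z 0) ^ p * z 0 ^ (p - 1) * (q * z 1 ^ q * conj (z 1) ^ (q - 1)))
      / (1 + (z 0 * conj (z 0)) ^ p + (z 1 * conj (z 1)) ^ q) ^ 2 := by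
  simp only [wirt, upol, update_self, ne_eq, zero_ne_one, one_ne_zero, not_false_eq_true,
    update_of_ne]
  exact deriv_deriv_log_add ((hasDerivAt_mul_const_pow (conj (z 0)) (z 0) p).const_add 1)
    (hasDerivAt_const_mul_pow (z 1) (conj (z 1)) q)
    (one_add_pow_add_pow_mem_slitPlane (z 0) (z 1) p q)

theorem wirt_upol_one_zero : wirt (upol p q) z 1 0
    = -(q * conj (z 1) ^ q * z 1 ^ (q - 1) * (p * z 0 ^ p * conj (z 0) ^ (p - 1)))
      / (1 + (z 0 * conj (z 0)) ^ p + (z 1 * conj (z 1)) ^ q) ^ 2 := by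
  simp only [wirt, upol, update_self, ne_eq, zero_ne_one, one_ne_zero, not_false_eq_true,
    update_of_ne, add_right_comm _ ((z 0 * _) ^ p)]
  exact deriv_deriv_log_add ((hasDerivAt_mul_const_pow (conj (z 1)) (z 1) q).const_add 1)
    (hasDerivAt_const_mul_pow (z 0) (conj (z 0)) p)
    (one_add_pow_add_pow_mem_slitPlane (z 1) (z 0) q p)

end WirtUpol

theorem stmt_2_general (p q : ℕ) (z : Fin 2 → ℂ) :
    (Matrix.of fun α β => wirt (upol p q) z α β).det
      = (p:ℂ)^2 * (q:ℂ)^2 * ((Complex.normSq (z 0) : ℂ))^(p-1)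
          * ((Complex.normSq (z 1) : ℂ))^(q-1)
        / (1 + ((Complex.normSq (z 0) : ℂ))^p + ((Complex.normSq (z 1) : ℂ))^q)^3 := by
  have hD := slitPlane_ne_zero (one_add_pow_add_pow_mem_slitPlane (z 0) (z 1) p q)
  rw [Matrix.det_fin_two]
  simp only [Matrix.of_apply, wirt_upol_zero_zero, wirt_upol_one_one, wirt_upol_zero_one,
    wirt_upol_one_zero, ← mul_conj]
  field_simp
  ring

/-- The determinant of the 2×2 Hermitian matrix `h_{αβ̄} = ∂²u/∂z_α∂z̄_β` obtained from
the Kähler potential `u = log(1 + |z₁|^{2p} + |z₂|^{2q})` equals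
`p²q²|z₁|^{2(p-1)}|z₂|^{2(q-1)}/(1 + |z₁|^{2p} + |z₂|^{2q})³` wherever `z₁, z₂ ≠ 0`. -/
theorem stmt_2 (p q : ℕ) (hp : 0 < p) (hq : 0 < q) (z : Fin 2 → ℂ)
    (h1 : z 0 ≠ 0) (h2 : z 1 ≠ 0) :
    (Matrix.of fun α β => wirt (upol p q) z α β).det
      = (p:ℂ)^2 * (q:ℂ)^2 * ((Complex.normSq (z 0) : ℂ))^(p-1)
          * ((Complex.normSq (z 1) : ℂ))^(q-1)
        / (1 + ((Complex.normSq (z 0) : ℂ))^p + ((Complex.normSq (z 1) : ℂ))^q)^3 :=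
  stmt_2_general p q z
end

section
/- For positive integers p and q, the function Δ(z₁,z₂) = p²q²·|z₁|^{2(p-1)}·|z₂|^{2(q-1)} / (1 + |z₁|^{2p} + |z₂|^{2q})³ satisfies, at every point with z₁, z₂ ≠ 0, the identity -∂²(log Δ)/∂z_α ∂z̄_β = 3·∂²u/∂z_α ∂z̄_β for all α, β ∈ {1,2}, where u(z₁,z₂) = log(1 + |z₁|^{2p} + |z₂|^{2q}). -/
open Complex

/-- `log Δ` for `Δ = p²q²|z₁|^{2(p-1)}|z₂|^{2(q-1)}/(1+|z₁|^{2p}+|z₂|^{2q})³`, polarized. -/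
noncomputable def logDelta (p q : ℕ) : (Fin 2 → ℂ) → (Fin 2 → ℂ) → ℂ :=
  fun z w => Complex.log ((p:ℂ)^2 * (q:ℂ)^2 * (z 0 * w 0)^(p-1) * (z 1 * w 1)^(q-1)
    / (1 + (z 0 * w 0)^p + (z 1 * w 1)^q)^3)

/-!
After polarization, `w` standing for `z̄`, the argument of `log Δ` factors as
`(p²q² z₁^{p-1} z₂^{q-1}) · (w₁^{p-1} w₂^{q-1}) / P(z, w)³` with `P` the polarized
`1 + |z₁|^{2p} + |z₂|^{2q}`. Near the diagonal all three factors stay in the slit plane, so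
`log Δ` is locally a function of `z` alone, plus one of `w` alone, minus `3 log P`; the mixed
derivative `∂_z ∂_w` kills the first two, leaving `-3 ∂_z ∂_w log P = -3 ∂_z ∂_w u`.
-/

open Filter Topology ComplexConjugate

@[fun_prop]
theorem differentiable_update_apply {𝕜 ι : Type*} [NontriviallyNormedField 𝕜] [DecidableEq ι]
    (w : ι → 𝕜) (β i : ι) : Differentiable 𝕜 (fun t => Function.update w β t i) := by
  simp only [Function.update_apply]
  split_ifs <;> fun_prop

theorem logDeriv_const_mul_div_pow {g P : ℂ → ℂ} {t : ℂ} (a : ℂ) (n : ℕ)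
    (hg : DifferentiableAt ℂ g t) (hP : DifferentiableAt ℂ P t) (h : a * g t / P t ^ n ≠ 0) :
    logDeriv (fun t => a * g t / P t ^ n) t = logDeriv g t - n * logDeriv P t := by
  obtain ⟨⟨ha, hgt⟩, hPt⟩ : (a ≠ 0 ∧ g t ≠ 0) ∧ P t ^ n ≠ 0 := by
    simpa only [div_ne_zero_iff, mul_ne_zero_iff] using h
  rw [logDeriv_div (f := fun t => a * g t) (g := fun t => P t ^ n) t (mul_ne_zero ha hgt) hPt
      (hg.const_mul a) (hP.pow n),
    logDeriv_const_mul t a ha, logDeriv_fun_pow hP]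

theorem deriv_deriv_log_mul_div_pow {f g : ℂ → ℂ} {P : ℂ → ℂ → ℂ} {s₀ t₀ : ℂ} (n : ℕ)
    (hg : DifferentiableAt ℂ g t₀)
    (hP : ∀ᶠ s in 𝓝 s₀, DifferentiableAt ℂ (P s) t₀ ∧ P s t₀ ∈ slitPlane ∧
      f s * g t₀ / P s t₀ ^ n ∈ slitPlane) :
    deriv (fun s => deriv (fun t => log (f s * g t / P s t ^ n)) t₀) s₀
      = -n * deriv (fun s => deriv (fun t => log (P s t)) t₀) s₀ := by
  have hinner : (fun s => deriv (fun t => log (f s * g t / P s t ^ n)) t₀) =ᶠ[𝓝 s₀]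
      fun s => logDeriv g t₀ - n * deriv (fun t => log (P s t)) t₀ := by
    filter_upwards [hP] with s ⟨hPs, hPslit, hslit⟩
    have hquot : DifferentiableAt ℂ (fun t => f s * g t / P s t ^ n) t₀ :=
      (hg.const_mul _).div (hPs.pow n) (pow_ne_zero n (slitPlane_ne_zero hPslit))
    calc deriv (fun t => log (f s * g t / P s t ^ n)) t₀
        = logDeriv (fun t => f s * g t / P s t ^ n) t₀ :=
          deriv_log_comp_eq_logDeriv hquot hslit
      _ = logDeriv g t₀ - n * logDeriv (P s) t₀ :=
          logDeriv_const_mul_div_pow _ n hg hPs (slitPlane_ne_zero hslit)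
      _ = logDeriv g t₀ - n * deriv (fun t => log (P s t)) t₀ := by
          rw [← deriv_log_comp_eq_logDeriv hPs hPslit]; rfl
  rw [hinner.deriv_eq, deriv_const_sub, deriv_const_mul_field']
  ring

def kahlerDenom (p q : ℕ) (z w : Fin 2 → ℂ) : ℂ :=
  1 + (z 0 * w 0) ^ p + (z 1 * w 1) ^ q

def branchFactor (p q : ℕ) (w : Fin 2 → ℂ) : ℂ :=
  w 0 ^ (p - 1) * w 1 ^ (q - 1)

theorem logDelta_eq_log_branchFactor (p q : ℕ) (z w : Fin 2 → ℂ) :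
    logDelta p q z w = log ((p ^ 2 * q ^ 2 * branchFactor p q z) * branchFactor p q w
      / kahlerDenom p q z w ^ 3) := by
  simp only [logDelta, branchFactor, kahlerDenom, mul_pow]
  ring_nf

theorem kahlerDenom_conj (p q : ℕ) (z : Fin 2 → ℂ) :
    kahlerDenom p q z (fun i => conj (z i))
      = ((1 + normSq (z 0) ^ p + normSq (z 1) ^ q : ℝ) : ℂ) := by
  simp only [kahlerDenom, mul_conj]
  push_cast
  rfl

theorem branchFactor_mul_conj (p q : ℕ) (z : Fin 2 → ℂ) :
    branchFactor p q z * branchFactor p q (fun i => conj (z i))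
      = ((normSq (z 0) ^ (p - 1) * normSq (z 1) ^ (q - 1) : ℝ) : ℂ) := by
  push_cast
  simp only [branchFactor, ← mul_conj]
  ring

theorem kahlerDenom_conj_mem_slitPlane (p q : ℕ) (z : Fin 2 → ℂ) :
    kahlerDenom p q z (fun i => conj (z i)) ∈ slitPlane := by
  have h0 := normSq_nonneg (z 0)
  have h1 := normSq_nonneg (z 1)
  rw [kahlerDenom_conj, ofReal_mem_slitPlane]
  positivity

theorem logDelta_arg_conj_mem_slitPlane {p q : ℕ} (hp : 0 < p) (hq : 0 < q) {z : Fin 2 → ℂ}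
    (h0 : z 0 ≠ 0) (h1 : z 1 ≠ 0) :
    (p ^ 2 * q ^ 2 * branchFactor p q z) * branchFactor p q (fun i => conj (z i))
      / kahlerDenom p q z (fun i => conj (z i)) ^ 3 ∈ slitPlane := by
  have h0 := normSq_pos.2 h0
  have h1 := normSq_pos.2 h1
  have hreal : (p ^ 2 * q ^ 2 * branchFactor p q z) * branchFactor p q (fun i => conj (z i))
      / kahlerDenom p q z (fun i => conj (z i)) ^ 3
      = ((p ^ 2 * q ^ 2 * (normSq (z 0) ^ (p - 1) * normSq (z 1) ^ (q - 1))
        / (1 + normSq (z 0) ^ p + normSq (z 1) ^ q) ^ 3 : ℝ) : ℂ) := by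
    rw [mul_assoc, branchFactor_mul_conj, kahlerDenom_conj]
    push_cast
    rfl
  rw [hreal, ofReal_mem_slitPlane]
  positivity

theorem eventually_update_mem_slitPlane {p q : ℕ} (hp : 0 < p) (hq : 0 < q)
    {z : Fin 2 → ℂ} (h0 : z 0 ≠ 0) (h1 : z 1 ≠ 0) (α : Fin 2) :
    ∀ᶠ s in 𝓝 (z α),
      kahlerDenom p q (Function.update z α s) (fun i => conj (z i)) ∈ slitPlane ∧
      (p ^ 2 * q ^ 2 * branchFactor p q (Function.update z α s))
          * branchFactor p q (fun i => conj (z i))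
        / kahlerDenom p q (Function.update z α s) (fun i => conj (z i)) ^ 3 ∈ slitPlane := by
  have hdenom : ContinuousAt
      (fun s => kahlerDenom p q (Function.update z α s) (fun i => conj (z i))) (z α) := by
    unfold kahlerDenom; fun_prop
  have hbranch : ContinuousAt (fun s => branchFactor p q (Function.update z α s)) (z α) := by
    unfold branchFactor; fun_prop
  have hdiag := kahlerDenom_conj_mem_slitPlane p q z
  refine (hdenom.eventually_mem (isOpen_slitPlane.mem_nhds ?_)).and
    ((((hbranch.const_mul _).mul_const _).div (hdenom.pow 3) ?_).eventually_mem
      (isOpen_slitPlane.mem_nhds ?_))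
  all_goals simp only [Function.update_eq_self, Pi.div_apply, Pi.pow_apply]
  · exact hdiag
  · exact pow_ne_zero 3 (slitPlane_ne_zero hdiag)
  · exact logDelta_arg_conj_mem_slitPlane hp hq h0 h1

/-- Einstein condition: `−∂²(log Δ)/∂z_α∂z̄_β = 3·∂²u/∂z_α∂z̄_β` at every point with
`z₁, z₂ ≠ 0`, i.e. the branched-cover metric is Kähler–Einstein with constant 3. -/
theorem stmt_3 (p q : ℕ) (hp : 0 < p) (hq : 0 < q) (z : Fin 2 → ℂ)
    (h1 : z 0 ≠ 0) (h2 : z 1 ≠ 0) (α β : Fin 2) :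
    -(wirt (logDelta p q) z α β) = 3 * wirt (upol p q) z α β := by
  set zbar : Fin 2 → ℂ := fun i => conj (z i)
  set Z := fun s => Function.update z α s
  set W := fun t => Function.update zbar β t
  have hdelta : wirt (logDelta p q) z α β = deriv (fun s => deriv (fun t =>
      log ((p ^ 2 * q ^ 2 * branchFactor p q (Z s)) * branchFactor p q (W t)
        / kahlerDenom p q (Z s) (W t) ^ 3)) (zbar β)) (z α) := by
    simp only [wirt, logDelta_eq_log_branchFactor]; rfl
  have hu : wirt (upol p q) z α β = deriv (fun s => deriv (fun t =>
      log (kahlerDenom p q (Z s) (W t))) (zbar β)) (z α) := rfl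
  have hW : W (zbar β) = zbar := Function.update_eq_self β zbar
  rw [hdelta, hu, deriv_deriv_log_mul_div_pow 3 (by unfold branchFactor; fun_prop)
    ((eventually_update_mem_slitPlane hp hq h1 h2 α).mono fun s hs =>
      ⟨by unfold kahlerDenom; fun_prop, by simpa only [hW] using hs⟩)]
  push_cast
  ring
end

section
/- Let D₁ ≥ D₂ ≥ … ≥ D_k > 0 and β > 0, and suppose ε := Σ_{j≥2} e^{β(Dⱼ−D₁)} is small. Then the weighted average (Σᵢ Dᵢ e^{β Dᵢ})/(Σᵢ e^{β Dᵢ}) equals D₁·(1 − Σ_{j≥2}(1 − Dⱼ/D₁)e^{β(Dⱼ−D₁)}) + O(ε²), i.e., the difference between the two quantities is bounded by a constant times D₁·ε². -/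
open Finset Real

/-!
Normalise every Boltzmann weight by the dominant one: with `wⱼ = e^{β(Dⱼ−D₀)}`, `ε = Σ_{j≥1} wⱼ`
and `T = Σ_{j≥1} Dⱼ wⱼ`, the weighted average is `(D₀ + T)/(1 + ε)` and the claimed expansion is
`D₀(1 − ε) + T`. Their difference is exactly `ε(D₀ε − T)/(1 + ε)`, and `0 ≤ T ≤ D₀ε` because
`0 < Dⱼ ≤ D₀`, so the error lies in `[0, D₀ε²]`.
-/

theorem sum_mul_exp_div_sum_exp_eq {ι : Type*} [Fintype ι] [DecidableEq ι] (f x : ι → ℝ)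
    (i₀ : ι) :
    (∑ i, f i * exp (x i)) / ∑ i, exp (x i) =
      (f i₀ + ∑ j ∈ univ.erase i₀, f j * exp (x j - x i₀)) /
        (1 + ∑ j ∈ univ.erase i₀, exp (x j - x i₀)) := by
  have hshift (g : ι → ℝ) : ∑ i, g i * exp (x i) =
      exp (x i₀) * (g i₀ + ∑ j ∈ univ.erase i₀, g j * exp (x j - x i₀)) := by
    rw [← add_sum_erase univ _ (mem_univ i₀), mul_add, mul_sum]
    congr 1
    · ring
    · refine sum_congr rfl fun j _ => ?_
      rw [mul_left_comm, ← exp_add, add_sub_cancel]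
  have hden := hshift 1
  simp only [Pi.one_apply, one_mul] at hden
  rw [hshift, hden, mul_div_mul_left _ _ (exp_pos _).ne']

theorem mul_one_sub_sum_one_sub_div_mul {ι : Type*} (s : Finset ι) {a : ℝ} (ha : a ≠ 0)
    (d w : ι → ℝ) :
    a * (1 - ∑ j ∈ s, (1 - d j / a) * w j) = a * (1 - ∑ j ∈ s, w j) + ∑ j ∈ s, d j * w j := by
  simp only [sub_mul, one_mul, sum_sub_distrib, div_mul_eq_mul_div, ← sum_div]
  field_simp
  ring

theorem abs_add_div_one_add_sub_le {a t ε : ℝ} (hε : 0 ≤ ε) (ht : 0 ≤ t) (hta : t ≤ a * ε) :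
    |(a + t) / (1 + ε) - (a * (1 - ε) + t)| ≤ a * ε ^ 2 := by
  have hpos : 0 < 1 + ε := by linarith
  have herr : (a + t) / (1 + ε) - (a * (1 - ε) + t) = ε * (a * ε - t) / (1 + ε) := by
    field_simp
    ring
  have hnum : 0 ≤ ε * (a * ε - t) := mul_nonneg hε (by linarith)
  rw [herr, abs_of_nonneg (div_nonneg hnum hpos.le), div_le_iff₀ hpos]
  nlinarith [mul_nonneg hε ht, mul_nonneg hε hnum]

/-- For `D₀ ≥ D₁ ≥ … ≥ D_k > 0` and `β > 0`, if `ε := Σ_{j≥1} e^{β(Dⱼ−D₀)}` is small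
(`ε ≤ 1/2`), then the weighted average `(ΣᵢDᵢe^{βDᵢ})/(Σᵢe^{βDᵢ})` equals
`D₀·(1 − Σ_{j≥1}(1 − Dⱼ/D₀)e^{β(Dⱼ−D₀)})` up to an error bounded by a constant times
`D₀·ε²`. -/
theorem stmt_13 :
    ∃ C : ℝ, 0 < C ∧
      ∀ (k : ℕ) (D : Fin (k+1) → ℝ), Antitone D → (∀ i, 0 < D i) →
        ∀ β : ℝ, 0 < β →
          (∑ j ∈ Finset.univ.erase (0 : Fin (k+1)), Real.exp (β * (D j - D 0))) ≤ 1/2 →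
          |(∑ i, D i * Real.exp (β * D i)) / (∑ i, Real.exp (β * D i))
              - D 0 * (1 - ∑ j ∈ Finset.univ.erase (0 : Fin (k+1)),
                  (1 - D j / D 0) * Real.exp (β * (D j - D 0)))|
            ≤ C * D 0 *
              (∑ j ∈ Finset.univ.erase (0 : Fin (k+1)), Real.exp (β * (D j - D 0)))^2 := by
  refine ⟨1, one_pos, fun k D hD hDpos β _ _ => ?_⟩
  have hw (j : Fin (k+1)) : 0 ≤ exp (β * (D j - D 0)) := (exp_pos _).le
  rw [sum_mul_exp_div_sum_exp_eq D (fun i => β * D i) 0,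
    mul_one_sub_sum_one_sub_div_mul _ (hDpos 0).ne', one_mul]
  simp_rw [← mul_sub]
  refine abs_add_div_one_add_sub_le (sum_nonneg fun j _ => hw j)
    (sum_nonneg fun j _ => mul_nonneg (hDpos j).le (hw j)) ?_
  rw [mul_sum]
  exact sum_le_sum fun j _ => mul_le_mul_of_nonneg_right (hD (Fin.zero_le j)) (hw j)
end
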